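/- arXiv:1309.3939 — 7 statements merged into one kernel-verified Lean document; each statement's English description precedes it below -/
import Mathlib

section
/- Let G be a group, V a finite-dimensional real inner product space, ρ : G →* (V ≃ₗᵢ[ℝ] V) an orthogonal representation, and W : Fin p → Submodule ℝ V a family of invariant submodules such that: the family (W i) is independent and ⨆ i, W i = ⊤; each W i is irreducible (W i ≠ ⊥ and the only invariant submodules contained in W i are ⊥ and W i); and for all i ≠ j every intertwining linear map from W i to W j is zero. Then for every equivariant self-adjoint linear map A : V →ₗ[ℝ] V there exists λ : Fin p → ℝ such that for every i and every x ∈ W i, A x = λ i • x. (In particular each W i lies in an eigenspace of A, so A is diagonal in any basis adapted to the decomposition: the Walpole and Kelvin decompositions coincide.) -/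
/-!
Orthogonal projections onto invariant subspaces are equivariant, so for `i ≠ j` the compression
`W i → V → W j` of any equivariant map is intertwining, hence zero. Applied to the identity this
makes the `W i` pairwise orthogonal, and applied to `A` it shows `A (W i) ⊥ W j`; as the `W i`
span `V`, `A` preserves each `W i`. On `W i` the self-adjoint `A` has an eigenvector, and the
corresponding eigenspace meets `W i` in a nonzero invariant subspace, which by irreducibility
is all of `W i`.
-/

theorem Submodule.mem_of_forall_ne_mem_orthogonal {𝕜 E ι : Type*} [RCLike 𝕜]
    [NormedAddCommGroup E] [InnerProductSpace 𝕜 E] {W : ι → Submodule 𝕜 E}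
    [∀ i, (W i).HasOrthogonalProjection] (hsup : ⨆ i, W i = ⊤)
    (horth : Pairwise fun i j => W i ⟂ W j) {i : ι} {v : E}
    (hv : ∀ j, j ≠ i → v ∈ (W j)ᗮ) : v ∈ W i := by
  have hperp : v - (W i).starProjection v ∈ (⨆ j, W j)ᗮ := by
    rw [← Submodule.iInf_orthogonal, Submodule.mem_iInf]
    intro j
    by_cases hji : j = i
    · subst hji
      exact (W j).sub_starProjection_mem_orthogonal v
    · exact sub_mem (hv j hji) (Submodule.isOrtho_iff_le.mp (horth (Ne.symm hji))
        ((W i).starProjection_apply_mem v))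
  rw [hsup, Submodule.top_orthogonal_eq_bot, Submodule.mem_bot, sub_eq_zero] at hperp
  rw [hperp]
  exact (W i).starProjection_apply_mem v

namespace IsometricRep

variable {𝕜 : Type*} [RCLike 𝕜] {G : Type*} [Group G] {V : Type*} [NormedAddCommGroup V]
  [InnerProductSpace 𝕜 V] (ρ : G →* (V ≃ₗᵢ[𝕜] V))

def IsInvariant (U : Submodule 𝕜 V) : Prop :=
  ∀ (g : G), ∀ x ∈ U, ρ g x ∈ U

def IsIrreducible (U : Submodule 𝕜 V) : Prop :=
  U ≠ ⊥ ∧ ∀ U' : Submodule 𝕜 V, IsInvariant ρ U' → U' ≤ U → U' = ⊥ ∨ U' = U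

def IsEquivariant (A : V →ₗ[𝕜] V) : Prop :=
  ∀ (g : G) (x : V), A (ρ g x) = ρ g (A x)

def Intertwines {U U' : Submodule 𝕜 V} (hU : IsInvariant ρ U) (f : U →ₗ[𝕜] U') : Prop :=
  ∀ (g : G) (x : U), (f ⟨ρ g x, hU g x x.2⟩ : V) = ρ g (f x)

variable {ρ}

theorem IsInvariant.inf {U U' : Submodule 𝕜 V} (hU : IsInvariant ρ U)
    (hU' : IsInvariant ρ U') : IsInvariant ρ (U ⊓ U') :=
  fun g x hx => ⟨hU g x hx.1, hU' g x hx.2⟩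

theorem IsInvariant.orthogonal {U : Submodule 𝕜 V} (hU : IsInvariant ρ U) :
    IsInvariant ρ Uᗮ := by
  intro g y hy
  rw [Submodule.mem_orthogonal'] at hy ⊢
  intro u hu
  rw [LinearIsometryEquiv.inner_map_eq_flip, ← LinearIsometryEquiv.inv_def, ← map_inv]
  exact hy _ (hU g⁻¹ u hu)

theorem IsInvariant.starProjection_apply {U : Submodule 𝕜 V} [U.HasOrthogonalProjection]
    (hU : IsInvariant ρ U) (g : G) (x : V) :
    U.starProjection (ρ g x) = ρ g (U.starProjection x) := by
  refine Submodule.eq_starProjection_of_mem_orthogonal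
    (hU g _ (U.starProjection_apply_mem x)) ?_
  rw [← map_sub]
  exact hU.orthogonal g _ (U.sub_starProjection_mem_orthogonal x)

theorem IsEquivariant.id : IsEquivariant ρ LinearMap.id :=
  fun _ _ => rfl

theorem IsEquivariant.isInvariant_eigenspace {A : V →ₗ[𝕜] V} (hA : IsEquivariant ρ A) (μ : 𝕜) :
    IsInvariant ρ (Module.End.eigenspace A μ) := by
  intro g x hx
  rw [Module.End.mem_eigenspace_iff] at hx ⊢
  rw [hA, hx, map_smul]

theorem IsEquivariant.intertwines_orthogonalProjectionOnto_comp {U U' : Submodule 𝕜 V}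
    [U'.HasOrthogonalProjection] (hU : IsInvariant ρ U) (hU' : IsInvariant ρ U')
    {A : V →ₗ[𝕜] V} (hA : IsEquivariant ρ A) :
    Intertwines ρ hU (U'.orthogonalProjectionOnto.toLinearMap ∘ₗ A ∘ₗ U.subtype) := by
  intro g x
  simp only [LinearMap.comp_apply, Submodule.subtype_apply, ContinuousLinearMap.coe_coe,
    ← Submodule.starProjection_apply, hA g, hU'.starProjection_apply]

theorem IsEquivariant.apply_mem_orthogonal {U U' : Submodule 𝕜 V}
    [U'.HasOrthogonalProjection] {A : V →ₗ[𝕜] V} (hA : IsEquivariant ρ A)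
    (hU : IsInvariant ρ U) (hU' : IsInvariant ρ U')
    (hzero : ∀ f : U →ₗ[𝕜] U', Intertwines ρ hU f → f = 0) :
    ∀ x ∈ U, A x ∈ U'ᗮ := by
  intro x hx
  rw [← Submodule.orthogonalProjectionOnto_eq_zero_iff]
  exact LinearMap.congr_fun (hzero _ (hA.intertwines_orthogonalProjectionOnto_comp hU hU'))
    ⟨x, hx⟩

theorem IsIrreducible.exists_apply_eq_smul [FiniteDimensional 𝕜 V] {W : Submodule 𝕜 V}
    (hirr : IsIrreducible ρ W) (hW : IsInvariant ρ W) {A : V →ₗ[𝕜] V}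
    (hA : IsEquivariant ρ A) (hsym : A.IsSymmetric) (hAW : ∀ x ∈ W, A x ∈ W) :
    ∃ μ : 𝕜, ∀ x ∈ W, A x = μ • x := by
  have : Nontrivial W := Submodule.nontrivial_iff_ne_bot.mpr hirr.1
  obtain ⟨μ, hμ⟩ : ∃ μ : 𝕜, Module.End.HasEigenvalue (A.restrict hAW) μ :=
    ⟨_, (hsym.restrict_invariant hAW).hasEigenvalue_iSup_of_finiteDimensional⟩
  obtain ⟨v, hv, hv0⟩ := hμ.exists_hasEigenvector
  have hvμ : (v : V) ∈ W ⊓ Module.End.eigenspace A μ :=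
    ⟨v.2, Module.End.mem_eigenspace_iff.mpr (congrArg Subtype.val
      (Module.End.mem_eigenspace_iff.mp hv))⟩
  have hfull : W ⊓ Module.End.eigenspace A μ = W :=
    (hirr.2 _ (hW.inf (hA.isInvariant_eigenspace μ)) inf_le_left).resolve_left
      ((Submodule.ne_bot_iff _).mpr ⟨v, hvμ, by simpa using hv0⟩)
  exact ⟨μ, fun x hx => Module.End.mem_eigenspace_iff.mp (hfull.ge hx).2⟩

end IsometricRep

open IsometricRep

open scoped RealInnerProductSpace

theorem walpole_kelvin_multiplicity_free_general
    {G : Type*} [Group G] {V : Type*} [NormedAddCommGroup V]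
    [InnerProductSpace ℝ V] [FiniteDimensional ℝ V]
    {p : ℕ} (ρ : G →* (V ≃ₗᵢ[ℝ] V))
    (W : Fin p → Submodule ℝ V)
    (hinv : ∀ (i : Fin p) (g : G), ∀ x ∈ W i, ρ g x ∈ W i)
    (hsup : ⨆ i, W i = ⊤)
    (hirr : ∀ i : Fin p, W i ≠ ⊥ ∧ ∀ U : Submodule ℝ V,
      (∀ (g : G), ∀ x ∈ U, ρ g x ∈ U) → U ≤ W i → U = ⊥ ∨ U = W i)
    (hnocoupling : ∀ (i j : Fin p), i ≠ j → ∀ f : W i →ₗ[ℝ] W j,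
      (∀ (g : G) (x : W i),
        ((f ⟨ρ g (x : V), hinv i g (x : V) x.2⟩ : W j) : V) = ρ g ((f x : W j) : V)) →
      f = 0)
    (A : V →ₗ[ℝ] V)
    (hsa : ∀ x y : V, ⟪A x, y⟫ = ⟪x, A y⟫)
    (heqv : ∀ (g : G) (x : V), A (ρ g x) = ρ g (A x)) :
    ∃ lam : Fin p → ℝ, ∀ i : Fin p, ∀ x ∈ W i, A x = lam i • x := by
  have hA : IsEquivariant ρ A := heqv
  have hpair : Pairwise fun i j => W i ⟂ W j := fun i j hij =>
    Submodule.isOrtho_iff_le.mpr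
      (IsEquivariant.id.apply_mem_orthogonal (hinv i) (hinv j) (hnocoupling i j hij))
  have hAW : ∀ i, ∀ x ∈ W i, A x ∈ W i := fun i x hx =>
    Submodule.mem_of_forall_ne_mem_orthogonal hsup hpair fun j hji =>
      hA.apply_mem_orthogonal (hinv i) (hinv j) (hnocoupling i j (Ne.symm hji)) x hx
  choose lam hlam using fun i =>
    IsIrreducible.exists_apply_eq_smul (hirr i) (hinv i) hA hsa (hAW i)
  exact ⟨lam, hlam⟩

theorem walpole_kelvin_multiplicity_free
    {G : Type*} [Group G] {V : Type*} [NormedAddCommGroup V]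
    [InnerProductSpace ℝ V] [FiniteDimensional ℝ V]
    {p : ℕ} (ρ : G →* (V ≃ₗᵢ[ℝ] V))
    (W : Fin p → Submodule ℝ V)
    (hinv : ∀ (i : Fin p) (g : G), ∀ x ∈ W i, ρ g x ∈ W i)
    (hindep : iSupIndep W)
    (hsup : ⨆ i, W i = ⊤)
    (hirr : ∀ i : Fin p, W i ≠ ⊥ ∧ ∀ U : Submodule ℝ V,
      (∀ (g : G), ∀ x ∈ U, ρ g x ∈ U) → U ≤ W i → U = ⊥ ∨ U = W i)
    (hnocoupling : ∀ (i j : Fin p), i ≠ j → ∀ f : W i →ₗ[ℝ] W j,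
      (∀ (g : G) (x : W i),
        ((f ⟨ρ g (x : V), hinv i g (x : V) x.2⟩ : W j) : V) = ρ g ((f x : W j) : V)) →
      f = 0)
    (A : V →ₗ[ℝ] V)
    (hsa : ∀ x y : V, ⟪A x, y⟫ = ⟪x, A y⟫)
    (heqv : ∀ (g : G) (x : V), A (ρ g x) = ρ g (A x)) :
    ∃ lam : Fin p → ℝ, ∀ i : Fin p, ∀ x ∈ W i, A x = lam i • x :=
  walpole_kelvin_multiplicity_free_general ρ W hinv hsup hirr hnocoupling A hsa heqv
end

section
/- Every homogeneous polynomial P of degree n in MvPolynomial (Fin 3) ℝ admits a unique decomposition P = ∑_{j : 0 ≤ 2j ≤ n} q^j * h j, where each h j ∈ MvPolynomial (Fin 3) ℝ is homogeneous of degree n − 2j and harmonic (Δ(h j) = 0). Uniqueness means: if (h j) and (h' j) are two such families, then h j = h' j for all j with 2j ≤ n. -/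
/-!
For `f` homogeneous of degree `k` in `d` variables, the product rule and Euler's identity give
`Δ (q^(j+1) f) = 2(j+1)(2k+2j+d) q^j f + q^(j+1) Δf`, where `q = ∑ xᵢ²`. Hence if each `hⱼ` is
harmonic of degree `n - 2j`, then `Δ (q ∑ qʲ hⱼ) = ∑ qʲ cⱼ hⱼ` with all `cⱼ ≠ 0`: on such sums `Δ`
inverts multiplication by `q` up to these scalars. A decomposition in degree `n + 2` is
`h₀ + q · (decomposition in degree n)` and `Δ` kills `h₀`, so by induction on the degree the tail
is determined by a decomposition of `ΔP` (uniqueness) or can be built from one (existence), after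
which `h₀ = P - q · tail` is harmonic.
-/

open MvPolynomial Finset

namespace MvPolynomial

variable {σ : Type*} [Fintype σ]

section CommSemiring

variable {R : Type*} [CommSemiring R]

noncomputable def laplacian : MvPolynomial σ R →ₗ[R] MvPolynomial σ R :=
  ∑ i, (pderiv i).toLinearMap ∘ₗ (pderiv i).toLinearMap

theorem laplacian_apply (p : MvPolynomial σ R) :
    laplacian p = ∑ i, pderiv i (pderiv i p) := by
  simp [laplacian]

theorem IsHomogeneous.laplacian {p : MvPolynomial σ R} {n : ℕ} (hp : p.IsHomogeneous n) :
    (laplacian p).IsHomogeneous (n - 2) := by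
  rw [laplacian_apply, ← mem_homogeneousSubmodule]
  exact Submodule.sum_mem _ fun i _ => hp.pderiv.pderiv

theorem laplacian_mul (a b : MvPolynomial σ R) :
    laplacian (a * b) =
      laplacian a * b + 2 * ∑ i, pderiv i a * pderiv i b + a * laplacian b := by
  simp only [laplacian_apply, Derivation.leibniz, map_add, smul_eq_mul, mul_sum, sum_mul,
    ← sum_add_distrib]
  exact sum_congr rfl fun i _ => by ring

noncomputable def sumSquares : MvPolynomial σ R := ∑ i, X i ^ 2

theorem isHomogeneous_sumSquares : (sumSquares : MvPolynomial σ R).IsHomogeneous 2 := by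
  rw [sumSquares, ← mem_homogeneousSubmodule]
  exact Submodule.sum_mem _ fun i _ => isHomogeneous_X_pow i 2

theorem pderiv_sumSquares (i : σ) : pderiv i (sumSquares : MvPolynomial σ R) = 2 * X i := by
  classical
  simp [sumSquares, pderiv_X, Pi.single_apply]

theorem laplacian_sumSquares :
    laplacian (sumSquares : MvPolynomial σ R) = (2 * Fintype.card σ : ℕ) := by
  have h2 : ∀ i : σ, pderiv i (2 : MvPolynomial σ R) = 0 := fun i => (pderiv i).map_natCast 2
  simp [laplacian_apply, pderiv_sumSquares, h2, mul_comm]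

theorem laplacian_sumSquares_mul {f : MvPolynomial σ R} {k : ℕ} (hf : f.IsHomogeneous k) :
    laplacian (sumSquares * f) =
      (4 * k + 2 * Fintype.card σ) • f + sumSquares * laplacian f := by
  rw [laplacian_mul, laplacian_sumSquares]
  simp only [pderiv_sumSquares, mul_assoc, ← mul_sum, hf.sum_X_mul_pderiv, nsmul_eq_mul]
  push_cast
  ring

theorem laplacian_sumSquares_pow_succ_mul {f : MvPolynomial σ R} {k : ℕ} (hf : f.IsHomogeneous k)
    (j : ℕ) :
    laplacian (sumSquares ^ (j + 1) * f) =
      (2 * (j + 1) * (2 * k + 2 * j + Fintype.card σ)) • (sumSquares ^ j * f) +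
        sumSquares ^ (j + 1) * laplacian f := by
  induction j with
  | zero =>
    rw [zero_add, pow_one, pow_zero, one_mul, laplacian_sumSquares_mul hf]
    ring_nf
  | succ j ih =>
    have hqf : (sumSquares ^ (j + 1) * f).IsHomogeneous (2 * (j + 1) + k) :=
      (isHomogeneous_sumSquares.pow (j + 1)).mul hf
    rw [pow_succ', mul_assoc, laplacian_sumSquares_mul hqf, ih]
    simp only [nsmul_eq_mul]
    push_cast
    ring

theorem IsHomogeneous.laplacian_eq_zero {p : MvPolynomial σ R} {n : ℕ} (hp : p.IsHomogeneous n)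
    (hn : n < 2) : MvPolynomial.laplacian p = 0 := by
  rw [laplacian_apply]
  refine sum_eq_zero fun i _ => ?_
  have hconst : (pderiv i p).IsHomogeneous 0 := by
    simpa [Nat.sub_eq_zero_of_le (by omega : n ≤ 1)] using hp.pderiv
  rw [← totalDegree_zero_iff_isHomogeneous, totalDegree_eq_zero_iff_eq_C] at hconst
  rw [hconst, pderiv_C]

def IsHarmonicFamily (n : ℕ) (h : ℕ → MvPolynomial σ R) : Prop :=
  ∀ j, 2 * j ≤ n → (h j).IsHomogeneous (n - 2 * j) ∧ laplacian (h j) = 0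

noncomputable def fischerSum (n : ℕ) (h : ℕ → MvPolynomial σ R) : MvPolynomial σ R :=
  ∑ j ∈ range (n / 2 + 1), sumSquares ^ j * h j

variable {n : ℕ} {h : ℕ → MvPolynomial σ R}

theorem fischerSum_of_lt_two (hn : n < 2) : fischerSum n h = h 0 := by
  simp [fischerSum, Nat.div_eq_of_lt hn]

theorem fischerSum_add_two :
    fischerSum (n + 2) h = h 0 + sumSquares * fischerSum n (fun j => h (j + 1)) := by
  rw [fischerSum, fischerSum, Nat.add_div_right n two_pos, sum_range_succ', add_comm, mul_sum]
  simp only [pow_zero, one_mul, pow_succ', mul_assoc]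

theorem isHarmonicFamily_iff_of_lt_two (hn : n < 2) :
    IsHarmonicFamily n h ↔ (h 0).IsHomogeneous n := by
  refine ⟨fun hh => by simpa using (hh 0 (by omega)).1, ?_⟩
  intro h0 j hj
  obtain rfl : j = 0 := by omega
  exact ⟨by simpa using h0, h0.laplacian_eq_zero hn⟩

theorem isHarmonicFamily_add_two_iff :
    IsHarmonicFamily (n + 2) h ↔
      (h 0).IsHomogeneous (n + 2) ∧ laplacian (h 0) = 0 ∧
        IsHarmonicFamily n (fun j => h (j + 1)) := by
  constructor
  · intro hh
    refine ⟨by simpa using (hh 0 (by omega)).1, (hh 0 (by omega)).2, fun j hj => ?_⟩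
    simpa [show n + 2 - 2 * (j + 1) = n - 2 * j by omega] using hh (j + 1) (by omega)
  · rintro ⟨hdeg, hharm, htail⟩ (_ | j) hj
    · exact ⟨hdeg, hharm⟩
    · simpa [show n + 2 - 2 * (j + 1) = n - 2 * j by omega] using htail j (by omega)

theorem IsHarmonicFamily.smul (hh : IsHarmonicFamily n h) (c : ℕ → R) :
    IsHarmonicFamily n (fun j => c j • h j) := by
  intro j hj
  refine ⟨?_, by rw [map_smul, (hh j hj).2, smul_zero]⟩
  exact (homogeneousSubmodule σ R _).smul_mem (c j) (hh j hj).1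

theorem IsHarmonicFamily.isHomogeneous_fischerSum (hh : IsHarmonicFamily n h) :
    (fischerSum n h).IsHomogeneous n := by
  rw [fischerSum, ← mem_homogeneousSubmodule]
  refine Submodule.sum_mem _ fun j hj => ?_
  have hj : 2 * j ≤ n := by rw [mem_range] at hj; omega
  have := (isHomogeneous_sumSquares.pow j).mul (hh j hj).1
  rwa [Nat.add_sub_cancel' hj] at this

variable (σ) in
def fischerCoeff (n j : ℕ) : ℕ := 2 * (j + 1) * (2 * (n - 2 * j) + 2 * j + Fintype.card σ)

theorem IsHarmonicFamily.laplacian_sumSquares_mul_fischerSum (hh : IsHarmonicFamily n h) :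
    laplacian (sumSquares * fischerSum n h) =
      fischerSum n (fun j => (fischerCoeff σ n j : R) • h j) := by
  rw [fischerSum, fischerSum, mul_sum, map_sum]
  refine sum_congr rfl fun j hj => ?_
  have hj : 2 * j ≤ n := by rw [mem_range] at hj; omega
  rw [← mul_assoc, ← pow_succ', laplacian_sumSquares_pow_succ_mul (hh j hj).1, (hh j hj).2,
    mul_zero, add_zero, Nat.cast_smul_eq_nsmul, mul_smul_comm, fischerCoeff]

end CommSemiring

section Field

variable {K : Type*} [Field K] [CharZero K] [Nonempty σ]
variable {n : ℕ} {h h' : ℕ → MvPolynomial σ K}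

theorem fischerCoeff_ne_zero (n j : ℕ) : (fischerCoeff σ n j : K) ≠ 0 := by
  have := Fintype.card_pos (α := σ)
  rw [Nat.cast_ne_zero, fischerCoeff]
  positivity

theorem exists_isHarmonicFamily_fischerSum_eq {P : MvPolynomial σ K} (hP : P.IsHomogeneous n) :
    ∃ h, IsHarmonicFamily n h ∧ fischerSum n h = P := by
  induction n using Nat.strong_induction_on generalizing P with
  | _ n ih =>
  by_cases hn : n < 2
  · exact ⟨fun _ => P, (isHarmonicFamily_iff_of_lt_two hn).2 hP, fischerSum_of_lt_two hn⟩
  obtain ⟨n, rfl⟩ : ∃ m, n = m + 2 := ⟨n - 2, by omega⟩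
  obtain ⟨g, hg, hgP⟩ := ih n (by omega) (by simpa using hP.laplacian)
  set g' : ℕ → MvPolynomial σ K := fun j => (fischerCoeff σ n j : K)⁻¹ • g j
  have hg' : IsHarmonicFamily n g' := hg.smul _
  have hlap : laplacian (sumSquares * fischerSum n g') = laplacian P := by
    rw [hg'.laplacian_sumSquares_mul_fischerSum, ← hgP]
    simp only [g', smul_smul, mul_inv_cancel₀ (fischerCoeff_ne_zero (K := K) n _), one_smul]
  refine ⟨fun j => match j with
    | 0 => P - sumSquares * fischerSum n g'
    | j + 1 => g' j, isHarmonicFamily_add_two_iff.2 ⟨?_, ?_, hg'⟩, ?_⟩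
  · rw [← mem_homogeneousSubmodule]
    refine Submodule.sub_mem _ hP ?_
    simpa [add_comm] using isHomogeneous_sumSquares.mul hg'.isHomogeneous_fischerSum
  · simp only [map_sub, hlap, sub_self]
  · simp only [fischerSum_add_two, sub_add_cancel]

theorem IsHarmonicFamily.eq_of_fischerSum_eq (hh : IsHarmonicFamily n h)
    (hh' : IsHarmonicFamily n h') (heq : fischerSum n h = fischerSum n h') :
    ∀ j ≤ n / 2, h j = h' j := by
  induction n using Nat.strong_induction_on generalizing h h' with
  | _ n ih =>
  by_cases hn : n < 2
  · intro j hj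
    obtain rfl : j = 0 := by omega
    rwa [fischerSum_of_lt_two hn, fischerSum_of_lt_two hn] at heq
  obtain ⟨n, rfl⟩ : ∃ m, n = m + 2 := ⟨n - 2, by omega⟩
  obtain ⟨-, hh0, htail⟩ := isHarmonicFamily_add_two_iff.1 hh
  obtain ⟨-, hh0', htail'⟩ := isHarmonicFamily_add_two_iff.1 hh'
  rw [fischerSum_add_two, fischerSum_add_two] at heq
  have hlap := congrArg laplacian heq
  rw [map_add, map_add, hh0, hh0', zero_add, zero_add, htail.laplacian_sumSquares_mul_fischerSum,
    htail'.laplacian_sumSquares_mul_fischerSum] at hlap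
  have htail_eq : ∀ j ≤ n / 2, h (j + 1) = h' (j + 1) := fun j hj =>
    smul_right_injective _ (fischerCoeff_ne_zero n j)
      (ih n (by omega) (htail.smul _) (htail'.smul _) hlap j hj)
  have hsum_eq : fischerSum n (fun j => h (j + 1)) = fischerSum n (fun j => h' (j + 1)) :=
    sum_congr rfl fun j hj =>
      congrArg (sumSquares ^ j * ·) (htail_eq j (by rw [mem_range] at hj; omega))
  rintro (_ | j) hj
  · rwa [hsum_eq, add_left_inj] at heq
  · exact htail_eq j (by omega)

end Field

end MvPolynomial

theorem harmonic_fischer_decomposition (n : ℕ) (P : MvPolynomial (Fin 3) ℝ)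
    (hP : P ∈ MvPolynomial.homogeneousSubmodule (Fin 3) ℝ n) :
    ∃! h : Fin (n / 2 + 1) → MvPolynomial (Fin 3) ℝ,
      (∀ j : Fin (n / 2 + 1),
        h j ∈ MvPolynomial.homogeneousSubmodule (Fin 3) ℝ (n - 2 * (j : ℕ)) ∧
        ∑ i : Fin 3, MvPolynomial.pderiv i (MvPolynomial.pderiv i (h j)) = 0) ∧
      P = ∑ j : Fin (n / 2 + 1),
        (MvPolynomial.X 0 ^ 2 + MvPolynomial.X 1 ^ 2 + MvPolynomial.X 2 ^ 2) ^ (j : ℕ) * h j := by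
  have hsumSquares : (X 0 ^ 2 + X 1 ^ 2 + X 2 ^ 2 : MvPolynomial (Fin 3) ℝ) = sumSquares := by
    simp [sumSquares, Fin.sum_univ_three]
  have hfischerSum (h : ℕ → MvPolynomial (Fin 3) ℝ) :
      ∑ j : Fin (n / 2 + 1), sumSquares ^ (j : ℕ) * h j = fischerSum n h :=
    (sum_range fun j => sumSquares ^ j * h j).symm
  have hfamily (h : ℕ → MvPolynomial (Fin 3) ℝ) : IsHarmonicFamily n h ↔
      ∀ j : Fin (n / 2 + 1), h j ∈ homogeneousSubmodule (Fin 3) ℝ (n - 2 * (j : ℕ)) ∧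
        ∑ i : Fin 3, pderiv i (pderiv i (h j)) = 0 := by
    simp only [IsHarmonicFamily, Fin.forall_iff, mem_homogeneousSubmodule, laplacian_apply]
    exact forall_congr' fun j => ⟨fun H _ => H (by omega), fun H _ => H (by omega)⟩
  obtain ⟨g, hg, rfl⟩ :=
    exists_isHarmonicFamily_fischerSum_eq ((mem_homogeneousSubmodule _ _).1 hP)
  refine ⟨fun j => g j, ⟨(hfamily g).1 hg, by rw [hsumSquares, hfischerSum]⟩, ?_⟩
  rintro y ⟨hy, hyP⟩
  set y' : ℕ → MvPolynomial (Fin 3) ℝ := fun j => y (Fin.ofNat _ j)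
  have hy' (j : Fin (n / 2 + 1)) : y' j = y j := congrArg y (Fin.ofNat_val_eq_self j)
  simp only [← hy', hsumSquares, hfischerSum] at hy hyP
  funext j
  rw [← hy']
  exact ((hfamily y').2 hy).eq_of_fischerSum_eq hg hyP.symm j (by omega)
end

section
/- Let Sym₃ denote the subspace of Matrix (Fin 3) (Fin 3) ℝ consisting of symmetric matrices (Mᵀ = M), and let C : Sym₃ →ₗ[ℝ] Sym₃ be a linear map that is SO(3)-equivariant, i.e. C (Q * E * Qᵀ) = Q * (C E) * Qᵀ for every Q ∈ SO(3) and every symmetric matrix E. Then there exist real numbers a, b such that for every symmetric matrix E, C E = a • E + b • (Matrix.trace E) • (1 : Matrix (Fin 3) (Fin 3) ℝ). (Equivalently, C = 2G P^{ℍ²} + 3K P^{ℍ⁰}: C acts as the scalar a on traceless symmetric matrices and as the scalar a + 3b on multiples of the identity.) -/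
open Matrix

/-- The space of symmetric 3×3 real matrices. -/
def Sym3 : Submodule ℝ (Matrix (Fin 3) (Fin 3) ℝ) where
  carrier := {M | Mᵀ = M}
  add_mem' := by
    intro a b ha hb
    simp only [Set.mem_setOf_eq] at *
    rw [Matrix.transpose_add, ha, hb]
  zero_mem' := Matrix.transpose_zero
  smul_mem' := by
    intro c a ha
    simp only [Set.mem_setOf_eq] at *
    rw [Matrix.transpose_smul, ha]

/-!
The quarter turn about the first axis fixes the matrix unit `e₀₀`, so by equivariance it also
fixes `C e₀₀`; a symmetric matrix fixed by it has the form `diag(α, β, β)`, which is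
`(α - β) e₀₀ + β tr(e₀₀) 1`. Subtracting the isotropic map with these moduli leaves an equivariant
map vanishing at `e₀₀`, whose kernel is therefore a rotation-invariant subspace containing `e₀₀`.
Such a subspace contains all symmetric matrices: cyclic permutations of the axes give the other
diagonal units, and a single rotation outside the symmetry group of the cube turns `e₀₀` into a
combination of diagonal units and `e₀₁ + e₁₀`.
-/

namespace Matrix

variable {n R : Type*} [DecidableEq n]

def symmSingle [Semiring R] (i j : n) : Matrix n n R := single i j 1 + single j i 1

lemma symmSingle_comm [Semiring R] (i j : n) :
    (symmSingle i j : Matrix n n R) = symmSingle j i :=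
  add_comm _ _

variable [Fintype n]

lemma eq_sum_symmSingle {K : Type*} [Field K] [NeZero (2 : K)] {M : Matrix n n K}
    (hM : Mᵀ = M) : M = ∑ i, ∑ j, (M i j / 2) • symmSingle i j := by
  ext a b
  have hba : M b a = M a b := congr_fun₂ hM a b
  simp [symmSingle, Matrix.sum_apply, single_apply, Finset.sum_add_distrib, ite_and, hba]

section CommRing

variable [CommRing R]

def isotropic (a b : R) : Matrix n n R →ₗ[R] Matrix n n R :=
  a • LinearMap.id + b • (traceLinearMap n R R).smulRight 1

lemma isotropic_apply (a b : R) (M : Matrix n n R) :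
    isotropic a b M = a • M + b • M.trace • (1 : Matrix n n R) := rfl

lemma isotropic_conj {Q : Matrix n n R} (hQ : Qᵀ * Q = 1) (a b : R) (M : Matrix n n R) :
    isotropic a b (Q * M * Qᵀ) = Q * isotropic a b M * Qᵀ := by
  have hQ' : Q * Qᵀ = 1 := mul_eq_one_comm.mp hQ
  have htrace : (Q * M * Qᵀ).trace = M.trace := by rw [trace_mul_cycle, hQ, Matrix.one_mul]
  simp [isotropic_apply, htrace, Matrix.mul_add, Matrix.add_mul, hQ']

lemma permMatrix_mul_mul_transpose (σ : Equiv.Perm n) (M : Matrix n n R) :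
    σ.permMatrix R * M * (σ.permMatrix R)ᵀ = M.submatrix σ σ := by
  rw [transpose_permMatrix, PEquiv.toMatrix_toPEquiv_mul, PEquiv.mul_toMatrix_toPEquiv]
  ext i j
  simp [Equiv.Perm.inv_def]

lemma transpose_permMatrix_mul_self (σ : Equiv.Perm n) :
    (σ.permMatrix R)ᵀ * σ.permMatrix R = 1 := by
  rw [transpose_permMatrix, ← permMatrix_mul, mul_inv_cancel, permMatrix_one]

end CommRing

end Matrix

local notation "Mat₃" => Matrix (Fin 3) (Fin 3) ℝ

def rotX : Mat₃ := !![1, 0, 0; 0, 0, -1; 0, 1, 0]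

/-- A rotation with rational entries that is not a symmetry of the cube: the cube's rotations alone
allow three independent elastic constants. -/
noncomputable def rotZ345 : Mat₃ := !![3/5, -4/5, 0; 4/5, 3/5, 0; 0, 0, 1]

lemma transpose_rotX_mul_self : rotXᵀ * rotX = 1 := by
  ext i j; fin_cases i <;> fin_cases j <;> simp [rotX, mul_apply, Fin.sum_univ_three]

lemma det_rotX : rotX.det = 1 := by
  simp [rotX, det_fin_three]

lemma transpose_rotZ345_mul_self : rotZ345ᵀ * rotZ345 = 1 := by
  ext i j
  fin_cases i <;> fin_cases j <;> simp [rotZ345, mul_apply, Fin.sum_univ_three] <;> norm_num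

lemma det_rotZ345 : rotZ345.det = 1 := by
  simp [rotZ345, det_fin_three]; norm_num

lemma rotX_mul_single_mul_transpose : rotX * single 0 0 1 * rotXᵀ = single 0 0 1 := by
  ext i j
  fin_cases i <;> fin_cases j <;> simp [rotX, mul_apply, Fin.sum_univ_three, vecMul, dotProduct]

lemma eq_isotropic_of_rotX_conj_eq {M : Mat₃} (hM : Mᵀ = M) (h : rotX * M * rotXᵀ = M) :
    M = isotropic (M 0 0 - M 1 1) (M 1 1) (single 0 0 1) := by
  have e01 := congr_fun₂ h 0 1
  have e02 := congr_fun₂ h 0 2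
  have e12 := congr_fun₂ h 1 2
  have e11 := congr_fun₂ h 1 1
  have s01 := congr_fun₂ hM 0 1
  have s02 := congr_fun₂ hM 0 2
  have s12 := congr_fun₂ hM 1 2
  simp [rotX, mul_apply, Fin.sum_univ_three, vecMul, dotProduct] at e01 e02 e12 e11 s01 s02 s12
  ext i j; fin_cases i <;> fin_cases j <;> simp [isotropic_apply, one_apply] <;> linarith

/-- With `c = 3/5` and `s = 4/5`,
`rotZ345 (2 e₀₀) rotZ345ᵀ = 2 (c² e₀₀ + s² e₁₁ + c s (e₀₁ + e₁₀))`. -/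
lemma symmSingle_zero_one_eq_rotZ345_conj :
    (symmSingle 0 1 : Mat₃) = (25/24 : ℝ) • (rotZ345 * symmSingle 0 0 * rotZ345ᵀ
      - (9/25 : ℝ) • symmSingle 0 0 - (16/25 : ℝ) • symmSingle 1 1) := by
  simp only [symmSingle]
  ext i j; fin_cases i <;> fin_cases j <;>
    simp [rotZ345, mul_apply, Fin.sum_univ_three, vecMul, dotProduct, single_apply] <;> norm_num

lemma mem_sym3 {M : Mat₃} : M ∈ Sym3 ↔ Mᵀ = M := Iff.rfl

lemma conj_mem_sym3 (Q : Mat₃) {M : Mat₃} (hM : M ∈ Sym3) : Q * M * Qᵀ ∈ Sym3 := by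
  rw [mem_sym3, transpose_mul, transpose_mul, transpose_transpose, mem_sym3.mp hM,
    Matrix.mul_assoc]

lemma single_mem_sym3 (i : Fin 3) : single i i 1 ∈ Sym3 := transpose_single i i 1

lemma sym3_le_of_conj_mem (p : Submodule ℝ Mat₃)
    (hp : ∀ Q : Mat₃, Qᵀ * Q = 1 → Q.det = 1 → ∀ M ∈ p, Q * M * Qᵀ ∈ p)
    (h₀ : single 0 0 1 ∈ p) : Sym3 ≤ p := by
  have shift : ∀ i j, symmSingle i j ∈ p → symmSingle (i + 1) (j + 1) ∈ p := by
    intro i j h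
    have := hp _ (transpose_permMatrix_mul_self (finRotate 3).symm)
      (by simp [sign_finRotate]) _ h
    rw [permMatrix_mul_mul_transpose] at this
    simpa [symmSingle, submatrix_add, finRotate_apply] using this
  have hdiag : ∀ i, symmSingle i i ∈ p := by
    have h : symmSingle 0 0 ∈ p := by
      simpa [symmSingle, ← two_smul ℝ] using p.smul_mem 2 h₀
    intro i; fin_cases i
    exacts [h, shift _ _ h, shift _ _ (shift _ _ h)]
  have hoff : ∀ i, symmSingle i (i + 1) ∈ p := by
    have h : symmSingle 0 1 ∈ p := by
      rw [symmSingle_zero_one_eq_rotZ345_conj]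
      refine p.smul_mem _ (p.sub_mem (p.sub_mem ?_ (p.smul_mem _ (hdiag 0)))
        (p.smul_mem _ (hdiag 1)))
      exact hp _ transpose_rotZ345_mul_self det_rotZ345 _ (hdiag 0)
    intro i; fin_cases i
    exacts [h, shift _ _ h, shift _ _ (shift _ _ h)]
  have hall : ∀ i j, symmSingle i j ∈ p := by
    intro i j
    fin_cases i <;> fin_cases j
    all_goals first | exact hdiag _ | exact hoff _ | (rw [symmSingle_comm]; exact hoff _)
  intro M hM
  rw [eq_sum_symmSingle (mem_sym3.mp hM)]
  exact p.sum_mem fun i _ => p.sum_mem fun j _ => p.smul_mem _ (hall i j)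

lemma eq_zero_of_conj_equivariant (L : Sym3 →ₗ[ℝ] Mat₃)
    (hL : ∀ Q : Mat₃, Qᵀ * Q = 1 → Q.det = 1 →
      ∀ (E : Sym3) (hE : Q * (E : Mat₃) * Qᵀ ∈ Sym3), L ⟨Q * E * Qᵀ, hE⟩ = Q * L E * Qᵀ)
    (h₀ : L ⟨single 0 0 1, single_mem_sym3 0⟩ = 0) : L = 0 := by
  have hle : Sym3 ≤ (LinearMap.ker L).map Sym3.subtype := by
    refine sym3_le_of_conj_mem _ ?_ ⟨_, h₀, rfl⟩
    rintro Q hQ hdet _ ⟨E, hE, rfl⟩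
    refine ⟨⟨_, conj_mem_sym3 Q E.2⟩, ?_, rfl⟩
    simp_all [hL Q hQ hdet E]
  ext1 E
  obtain ⟨E', hE', hEE'⟩ := hle E.2
  rw [← Subtype.ext hEE']
  exact hE'

theorem isotropic_elasticity_bulk_shear
    (C : Sym3 →ₗ[ℝ] Sym3)
    (hC : ∀ Q : Matrix (Fin 3) (Fin 3) ℝ, Qᵀ * Q = 1 → Q.det = 1 →
      ∀ (E : Sym3) (hE : Q * (E : Matrix (Fin 3) (Fin 3) ℝ) * Qᵀ ∈ Sym3),
        ((C ⟨Q * (E : Matrix (Fin 3) (Fin 3) ℝ) * Qᵀ, hE⟩ : Sym3) : Matrix (Fin 3) (Fin 3) ℝ)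
          = Q * ((C E : Sym3) : Matrix (Fin 3) (Fin 3) ℝ) * Qᵀ) :
    ∃ a b : ℝ, ∀ E : Sym3,
      ((C E : Sym3) : Matrix (Fin 3) (Fin 3) ℝ)
        = a • (E : Matrix (Fin 3) (Fin 3) ℝ)
          + b • (Matrix.trace (E : Matrix (Fin 3) (Fin 3) ℝ))
              • (1 : Matrix (Fin 3) (Fin 3) ℝ) := by
  have hD := eq_isotropic_of_rotX_conj_eq (C ⟨single 0 0 1, single_mem_sym3 0⟩).2 (by
    rw [← hC rotX transpose_rotX_mul_self det_rotX _ (conj_mem_sym3 _ (single_mem_sym3 0))]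
    simp_rw [rotX_mul_single_mul_transpose])
  set D : Mat₃ := ((C ⟨single 0 0 1, single_mem_sym3 0⟩ : Sym3) : Mat₃)
  refine ⟨D 0 0 - D 1 1, D 1 1, fun E => ?_⟩
  have hL := eq_zero_of_conj_equivariant
    (Sym3.subtype ∘ₗ C - isotropic (D 0 0 - D 1 1) (D 1 1) ∘ₗ Sym3.subtype)
    (fun Q hQ hdet E hE => by
      simp [hC Q hQ hdet E hE, isotropic_conj hQ, Matrix.mul_sub, Matrix.sub_mul])
    (by simpa [sub_eq_zero] using hD)
  simpa [sub_eq_zero, isotropic_apply] using LinearMap.congr_fun hL E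
end

section
/- If U is an ℝ-submodule of (Fin 3 → ℝ) such that Matrix.mulVec Q v ∈ U for every Q ∈ SO(3) and every v ∈ U, then U = ⊥ or U = ⊤. (The standard SO(3)-representation on ℝ³, i.e. ℍ¹, is irreducible.) -/
open Matrix

-- sign-flip matrices
private def Dm (i : Fin 3) : Matrix (Fin 3) (Fin 3) ℝ :=
  Matrix.diagonal (fun j => if j = i then 1 else -1)

private lemma Dm_so3 (i : Fin 3) : (Dm i)ᵀ * Dm i = 1 ∧ (Dm i).det = 1 := by
  constructor
  · rw [Dm, Matrix.diagonal_transpose, Matrix.diagonal_mul_diagonal]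
    ext j k
    rcases eq_or_ne j k with rfl | h
    · by_cases hj : j = i <;> simp [hj, Matrix.one_apply]
    · simp [Matrix.diagonal_apply_ne _ h, Matrix.one_apply_ne h]
  · rw [Dm, Matrix.det_diagonal]
    fin_cases i <;> simp [Fin.prod_univ_three]

private def Pm : Matrix (Fin 3) (Fin 3) ℝ := !![0,0,1;1,0,0;0,1,0]

private lemma Pm_so3 : Pmᵀ * Pm = 1 ∧ Pm.det = 1 := by
  constructor
  · have ht : Pmᵀ = !![0,1,0;0,0,1;1,0,0] := by
      ext j k; fin_cases j <;> fin_cases k <;> rfl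
    rw [ht]
    ext j k
    fin_cases j <;> fin_cases k <;>
      simp [Pm, Matrix.mul_apply, Fin.sum_univ_three, Matrix.one_apply, Matrix.vecHead, Matrix.vecTail]
  · simp [Pm, Matrix.det_fin_three]

theorem standard_so3_representation_irreducible
    (U : Submodule ℝ (Fin 3 → ℝ))
    (hUinv : ∀ Q : Matrix (Fin 3) (Fin 3) ℝ, Qᵀ * Q = 1 → Q.det = 1 →
      ∀ v ∈ U, Q.mulVec v ∈ U) :
    U = ⊥ ∨ U = ⊤ := by
  by_cases hbot : U = ⊥
  · exact Or.inl hbot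
  right
  obtain ⟨v, hvU, hv0⟩ := Submodule.exists_mem_ne_zero_of_ne_bot hbot
  obtain ⟨i, hi⟩ := Function.ne_iff.mp hv0
  simp only [Pi.zero_apply] at hi
  -- step 1: Pi.single i 1 ∈ U
  have hDv : (Dm i).mulVec v ∈ U := hUinv _ (Dm_so3 i).1 (Dm_so3 i).2 v hvU
  have hsum : v + (Dm i).mulVec v = (2 * v i) • (Pi.single i (1 : ℝ) : Fin 3 → ℝ) := by
    funext j
    rcases eq_or_ne j i with rfl | h
    · simp [Dm, Matrix.mulVec_diagonal]
      ring
    · simp [Dm, Matrix.mulVec_diagonal, h, Pi.single_apply]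
  have hsingle : (Pi.single i (1 : ℝ) : Fin 3 → ℝ) ∈ U := by
    have h2 : (2 * v i) • (Pi.single i (1 : ℝ) : Fin 3 → ℝ) ∈ U := hsum ▸ U.add_mem hvU hDv
    have := U.smul_mem (2 * v i)⁻¹ h2
    rwa [smul_smul, inv_mul_cancel₀ (mul_ne_zero two_ne_zero hi), one_smul] at this
  have hP : ∀ w ∈ U, Pm.mulVec w ∈ U := hUinv _ Pm_so3.1 Pm_so3.2
  have estep : ∀ j : Fin 3, Pm.mulVec (Pi.single j (1:ℝ) : Fin 3 → ℝ)
      = (Pi.single (j + 1) (1:ℝ) : Fin 3 → ℝ) := by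
    intro j
    funext k
    fin_cases j <;> fin_cases k <;>
      simp [Pm, Matrix.mulVec, dotProduct, Fin.sum_univ_three, Pi.single_apply]
  have key : ∀ j : Fin 3, (Pi.single j (1:ℝ) : Fin 3 → ℝ) ∈ U := by
    have h1 : (Pi.single (i + 1) (1:ℝ) : Fin 3 → ℝ) ∈ U := by
      have := hP _ hsingle; rwa [estep] at this
    have h2 : (Pi.single (i + 1 + 1) (1:ℝ) : Fin 3 → ℝ) ∈ U := by
      have := hP _ h1; rwa [estep] at this
    intro j
    fin_cases i <;> fin_cases j <;>
      first
        | exact hsingle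
        | exact h1
        | exact h2
  rw [Submodule.eq_top_iff']
  intro x
  have hx : x = ∑ j : Fin 3, x j • (Pi.single j (1:ℝ) : Fin 3 → ℝ) := by
    funext k
    simp [Fin.sum_univ_three, Pi.single_apply]
  rw [hx]
  exact Submodule.sum_mem U fun j _ => U.smul_mem _ (key j)
end

section
/- Let 𝕋² be the submodule of (Fin 3 → Fin 3 → Fin 3 → ℝ) consisting of T with T i j k = T j i k for all i, j, k; let 𝕊 be the submodule of 𝕋² of completely symmetric tensors (T i j k = T j i k and T i j k = T i k j for all i, j, k), and let 𝕂 be the submodule of those T ∈ 𝕋² with T i j k + T k i j + T j k i = 0 for all i, j, k. Then: (i) 𝕊 ⊓ 𝕂 = ⊥ and 𝕊 ⊔ 𝕂 = 𝕋² (internal direct sum); (ii) finrank ℝ 𝕊 = 10 and finrank ℝ 𝕂 = 8; (iii) both 𝕊 and 𝕂 are invariant under the GL(3) action: for every invertible g : Matrix (Fin 3) (Fin 3) ℝ, the map (g • T) i j k = ∑ p q r, g i p * g j q * g k r * T p q r sends 𝕊 into 𝕊 and 𝕂 into 𝕂. -/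
/-- The space 𝕋² of third-order tensors symmetric in their first two indices. -/
def T2 : Submodule ℝ (Fin 3 → Fin 3 → Fin 3 → ℝ) where
  carrier := {T | ∀ i j k, T i j k = T j i k}
  add_mem' := by
    intro a b ha hb i j k
    simp only [Pi.add_apply]
    rw [ha i j k, hb i j k]
  zero_mem' := by intro i j k; rfl
  smul_mem' := by
    intro c a ha i j k
    simp only [Pi.smul_apply, smul_eq_mul]
    rw [ha i j k]

/-- The space 𝕊 of completely symmetric third-order tensors (the stretch-gradient part). -/
def SymS : Submodule ℝ (Fin 3 → Fin 3 → Fin 3 → ℝ) where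
  carrier := {T | (∀ i j k, T i j k = T j i k) ∧ (∀ i j k, T i j k = T i k j)}
  add_mem' := by
    rintro a b ⟨ha1, ha2⟩ ⟨hb1, hb2⟩
    constructor <;> intro i j k <;> simp only [Pi.add_apply]
    · rw [ha1 i j k, hb1 i j k]
    · rw [ha2 i j k, hb2 i j k]
  zero_mem' := ⟨fun _ _ _ => rfl, fun _ _ _ => rfl⟩
  smul_mem' := by
    rintro c a ⟨ha1, ha2⟩
    constructor <;> intro i j k <;> simp only [Pi.smul_apply, smul_eq_mul]
    · rw [ha1 i j k]
    · rw [ha2 i j k]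

/-- The space 𝕂 ⊆ 𝕋² of tensors with vanishing complete symmetrization
(the rotation-gradient part). -/
def KK : Submodule ℝ (Fin 3 → Fin 3 → Fin 3 → ℝ) where
  carrier := {T | (∀ i j k, T i j k = T j i k) ∧ (∀ i j k, T i j k + T k i j + T j k i = 0)}
  add_mem' := by
    rintro a b ⟨ha1, ha2⟩ ⟨hb1, hb2⟩
    constructor <;> intro i j k <;> simp only [Pi.add_apply]
    · rw [ha1 i j k, hb1 i j k]
    · have := ha2 i j k
      have := hb2 i j k
      linarith
  zero_mem' := ⟨fun _ _ _ => rfl, fun _ _ _ => by simp⟩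
  smul_mem' := by
    rintro c a ⟨ha1, ha2⟩
    constructor <;> intro i j k <;> simp only [Pi.smul_apply, smul_eq_mul]
    · rw [ha1 i j k]
    · have h := ha2 i j k
      have : c * a i j k + c * a k i j + c * a j k i = c * (a i j k + a k i j + a j k i) := by ring
      rw [this, h, mul_zero]

/-- The action of a 3×3 matrix on third-order tensors. -/
def act (g : Matrix (Fin 3) (Fin 3) ℝ) (T : Fin 3 → Fin 3 → Fin 3 → ℝ) :
    Fin 3 → Fin 3 → Fin 3 → ℝ :=
  fun i j k => ∑ p : Fin 3, ∑ q : Fin 3, ∑ r : Fin 3, g i p * g j q * g k r * T p q r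


/-- min of three indices -/
def mn3 (i j k : Fin 3) : Fin 3 := min i (min j k)
/-- median of three indices -/
def md3 (i j k : Fin 3) : Fin 3 := max (min i j) (min (max i j) k)
/-- max of three indices -/
def mx3 (i j k : Fin 3) : Fin 3 := max i (max j k)

/-- sorted triples: index set for 𝕊 -/
abbrev S10 := {t : Fin 3 × Fin 3 × Fin 3 // t.1 ≤ t.2.1 ∧ t.2.1 ≤ t.2.2}
/-- first-two-sorted triples: index set for 𝕋² -/
abbrev P18 := {t : Fin 3 × Fin 3 × Fin 3 // t.1 ≤ t.2.1}

lemma sort3_sorted : ∀ i j k : Fin 3, mn3 i j k ≤ md3 i j k ∧ md3 i j k ≤ mx3 i j k := by decide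

/-- sort a triple -/
def st (i j k : Fin 3) : S10 := ⟨(mn3 i j k, md3 i j k, mx3 i j k), sort3_sorted i j k⟩

lemma st_swap12 : ∀ i j k, st i j k = st j i k := by
  intro i j k; apply Subtype.ext; revert i j k; decide
lemma st_swap23 : ∀ i j k, st i j k = st i k j := by
  intro i j k; apply Subtype.ext; revert i j k; decide
lemma st_id : ∀ a b c : Fin 3, a ≤ b → b ≤ c →
    ((mn3 a b c, md3 a b c, mx3 a b c) : Fin 3 × Fin 3 × Fin 3) = (a, b, c) := by decide

lemma card_S10 : Fintype.card S10 = 10 := by decide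
lemma card_P18 : Fintype.card P18 = 18 := by decide

lemma symS_perm {T : Fin 3 → Fin 3 → Fin 3 → ℝ} (hT : T ∈ SymS) :
    ∀ i j k, T (mn3 i j k) (md3 i j k) (mx3 i j k) = T i j k := by
  obtain ⟨h1, h2⟩ := hT
  have e12 : ∀ i j k, T i j k = T j i k := h1
  have e23 : ∀ i j k, T i j k = T i k j := h2
  have e13 : ∀ i j k, T i j k = T k j i := by
    intro i j k; rw [h1 i j k, h2 j i k, h1 j k i]
  have ec : ∀ i j k, T i j k = T k i j := by
    intro i j k; rw [h2 i j k, h1 i k j]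
  have ec' : ∀ i j k, T i j k = T j k i := by
    intro i j k; rw [h1 i j k, h2 j i k]
  intro i j k
  fin_cases i <;> fin_cases j <;> fin_cases k <;>
    first
      | rfl
      | exact (e12 _ _ _).symm
      | exact (e23 _ _ _).symm
      | exact (e13 _ _ _).symm
      | exact (ec _ _ _).symm
      | exact (ec' _ _ _).symm

/-- 𝕊 is linearly equivalent to functions on sorted triples. -/
noncomputable def eqS : SymS ≃ₗ[ℝ] (S10 → ℝ) where
  toFun T s := T.1 s.1.1 s.1.2.1 s.1.2.2
  map_add' _ _ := rfl
  map_smul' _ _ := rfl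
  invFun F := ⟨fun i j k => F (st i j k), by
    refine ⟨fun i j k => ?_, fun i j k => ?_⟩
    · show F (st i j k) = F (st j i k); rw [st_swap12]
    · show F (st i j k) = F (st i k j); rw [st_swap23]⟩
  left_inv T := by
    apply Subtype.ext; funext i j k
    exact symS_perm T.2 i j k
  right_inv F := by
    funext s
    obtain ⟨⟨a, b, c⟩, hab, hbc⟩ := s
    exact congrArg F (Subtype.ext (st_id a b c hab hbc))

/-- 𝕋² is linearly equivalent to functions on first-two-sorted triples. -/
noncomputable def eqT : T2 ≃ₗ[ℝ] (P18 → ℝ) where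
  toFun T s := T.1 s.1.1 s.1.2.1 s.1.2.2
  map_add' _ _ := rfl
  map_smul' _ _ := rfl
  invFun F := ⟨fun i j k => F ⟨(min i j, max i j, k), min_le_max⟩, by
    intro i j k
    simp only [min_comm i j, max_comm i j]⟩
  left_inv T := by
    apply Subtype.ext; funext i j k
    show T.1 (min i j) (max i j) k = T.1 i j k
    rcases le_total i j with h | h
    · rw [min_eq_left h, max_eq_right h]
    · rw [min_eq_right h, max_eq_left h]; exact (T.2 i j k).symm
  right_inv F := by
    funext s
    obtain ⟨⟨a, b, c⟩, hab⟩ := s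
    have : ((min a b, max a b, c) : Fin 3 × Fin 3 × Fin 3) = (a, b, c) := by
      rw [min_eq_left hab, max_eq_right hab]
    exact congrArg F (Subtype.ext this)

lemma finrank_SymS : Module.finrank ℝ SymS = 10 := by
  rw [eqS.finrank_eq, Module.finrank_fintype_fun_eq_card, card_S10]

lemma finrank_T2 : Module.finrank ℝ T2 = 18 := by
  rw [eqT.finrank_eq, Module.finrank_fintype_fun_eq_card, card_P18]

lemma inf_eq_bot : SymS ⊓ KK = ⊥ := by
  rw [eq_bot_iff]
  rintro T ⟨⟨h1, h2⟩, _, hc⟩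
  have : T = 0 := by
    funext i j k
    have a1 := h1 k i j
    have a2 := h2 i k j
    have a3 := h2 j k i
    have a4 := h1 j i k
    have a5 := hc i j k
    simp only [Pi.zero_apply]
    linarith
  simp [this]

lemma sup_eq_T2 : SymS ⊔ KK = T2 := by
  apply le_antisymm
  · apply sup_le
    · rintro T ⟨hT1, _⟩; exact hT1
    · rintro T ⟨hT1, _⟩; exact hT1
  · intro T hT
    set S : Fin 3 → Fin 3 → Fin 3 → ℝ :=
      fun i j k => (T i j k + T k i j + T j k i) / 3 with hS
    have hSmem : S ∈ SymS := by
      constructor <;> intro i j k <;> simp only [hS] <;>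
        [ (have := hT i j k; have := hT i k j; have := hT k j i);
          (have := hT i j k; have := hT j i k; have := hT k i j)] <;>
        ring_nf <;> linarith [hT i j k, hT i k j, hT k j i, hT j i k, hT k i j, hT j k i]
    have hKmem : T - S ∈ KK := by
      constructor <;> intro i j k <;> simp only [Pi.sub_apply, hS]
      · have b1 := hT i j k
        have b2 := hT i k j
        have b3 := hT k j i
        linarith
      · ring
    have : T = S + (T - S) := by ring_nf
    rw [this]
    exact Submodule.add_mem_sup hSmem hKmem

lemma finrank_KK : Module.finrank ℝ KK = 8 := by
  have h := Submodule.finrank_sup_add_finrank_inf_eq SymS KK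
  rw [sup_eq_T2, inf_eq_bot, finrank_T2, finrank_SymS, finrank_bot] at h
  omega

theorem schur_splitting_of_strain_gradient :
    SymS ⊓ KK = ⊥ ∧ SymS ⊔ KK = T2 ∧
    Module.finrank ℝ SymS = 10 ∧ Module.finrank ℝ KK = 8 ∧
    (∀ g : Matrix (Fin 3) (Fin 3) ℝ, IsUnit g →
      (∀ T ∈ SymS, act g T ∈ SymS) ∧ (∀ T ∈ KK, act g T ∈ KK)) := by
  refine ⟨inf_eq_bot, sup_eq_T2, finrank_SymS, finrank_KK, fun g _ => ⟨?_, ?_⟩⟩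
  · rintro T ⟨h1, h2⟩
    refine ⟨fun i j k => ?_, fun i j k => ?_⟩
    · simp only [act, Fin.sum_univ_three]
      linear_combination g i 0 * g j 0 * g k 0 * h1 0 0 0 + g i 0 * g j 0 * g k 1 * h1 0 0 1 + g i 0 * g j 0 * g k 2 * h1 0 0 2 + g i 0 * g j 1 * g k 0 * h1 0 1 0 + g i 0 * g j 1 * g k 1 * h1 0 1 1 + g i 0 * g j 1 * g k 2 * h1 0 1 2 + g i 0 * g j 2 * g k 0 * h1 0 2 0 + g i 0 * g j 2 * g k 1 * h1 0 2 1 + g i 0 * g j 2 * g k 2 * h1 0 2 2 + g i 1 * g j 0 * g k 0 * h1 1 0 0 + g i 1 * g j 0 * g k 1 * h1 1 0 1 + g i 1 * g j 0 * g k 2 * h1 1 0 2 + g i 1 * g j 1 * g k 0 * h1 1 1 0 + g i 1 * g j 1 * g k 1 * h1 1 1 1 + g i 1 * g j 1 * g k 2 * h1 1 1 2 + g i 1 * g j 2 * g k 0 * h1 1 2 0 + g i 1 * g j 2 * g k 1 * h1 1 2 1 + g i 1 * g j 2 * g k 2 * h1 1 2 2 + g i 2 * g j 0 * g k 0 * h1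 2 0 0 + g i 2 * g j 0 * g k 1 * h1 2 0 1 + g i 2 * g j 0 * g k 2 * h1 2 0 2 + g i 2 * g j 1 * g k 0 * h1 2 1 0 + g i 2 * g j 1 * g k 1 * h1 2 1 1 + g i 2 * g j 1 * g k 2 * h1 2 1 2 + g i 2 * g j 2 * g k 0 * h1 2 2 0 + g i 2 * g j 2 * g k 1 * h1 2 2 1 + g i 2 * g j 2 * g k 2 * h1 2 2 2
    · simp only [act, Fin.sum_univ_three]
      linear_combination g i 0 * g j 0 * g k 0 * h2 0 0 0 + g i 0 * g j 0 * g k 1 * h2 0 0 1 + g i 0 * g j 0 * g k 2 * h2 0 0 2 + g i 0 * g j 1 * g k 0 * h2 0 1 0 + g i 0 * g j 1 * g k 1 * h2 0 1 1 + g i 0 * g j 1 * g k 2 * h2 0 1 2 + g i 0 * g j 2 * g k 0 * h2 0 2 0 + g i 0 * g j 2 * g k 1 * h2 0 2 1 + g i 0 * g j 2 * g k 2 * h2 0 2 2 + g i 1 * g j 0 * g k 0 * h2 1 0 0 + g i 1 * g j 0 * g k 1 * h2 1 0 1 + g i 1 * g j 0 * g k 2 * h2 1 0 2 + g i 1 *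 g j 1 * g k 0 * h2 1 1 0 + g i 1 * g j 1 * g k 1 * h2 1 1 1 + g i 1 * g j 1 * g k 2 * h2 1 1 2 + g i 1 * g j 2 * g k 0 * h2 1 2 0 + g i 1 * g j 2 * g k 1 * h2 1 2 1 + g i 1 * g j 2 * g k 2 * h2 1 2 2 + g i 2 * g j 0 * g k 0 * h2 2 0 0 + g i 2 * g j 0 * g k 1 * h2 2 0 1 + g i 2 * g j 0 * g k 2 * h2 2 0 2 + g i 2 * g j 1 * g k 0 * h2 2 1 0 + g i 2 * g j 1 * g k 1 * h2 2 1 1 + g i 2 * g j 1 * g k 2 * h2 2 1 2 + g i 2 * g j 2 * g k 0 * h2 2 2 0 + g i 2 * g j 2 * g k 1 * h2 2 2 1 + g i 2 * g j 2 * g k 2 * h2 2 2 2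
  · rintro T ⟨h1, hc⟩
    refine ⟨fun i j k => ?_, fun i j k => ?_⟩
    · simp only [act, Fin.sum_univ_three]
      linear_combination g i 0 * g j 0 * g k 0 * h1 0 0 0 + g i 0 * g j 0 * g k 1 * h1 0 0 1 + g i 0 * g j 0 * g k 2 * h1 0 0 2 + g i 0 * g j 1 * g k 0 * h1 0 1 0 + g i 0 * g j 1 * g k 1 * h1 0 1 1 + g i 0 * g j 1 * g k 2 * h1 0 1 2 + g i 0 * g j 2 * g k 0 * h1 0 2 0 + g i 0 * g j 2 * g k 1 * h1 0 2 1 + g i 0 * g j 2 * g k 2 * h1 0 2 2 + g i 1 * g j 0 * g k 0 * h1 1 0 0 + g i 1 * g j 0 * g k 1 * h1 1 0 1 + g i 1 * g j 0 * g k 2 * h1 1 0 2 + g i 1 * g j 1 * g k 0 * h1 1 1 0 + g i 1 * g j 1 * g k 1 * h1 1 1 1 + g i 1 * g j 1 * g k 2 * h1 1 1 2 + g i 1 * g j 2 * g k 0 * h1 1 2 0 + g i 1 * g j 2 * g k 1 * h1 1 2 1 + g i 1 * g j 2 * g k 2 * h1 1 2 2 + g i 2 * g j 0 * g k 0 * h1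 2 0 0 + g i 2 * g j 0 * g k 1 * h1 2 0 1 + g i 2 * g j 0 * g k 2 * h1 2 0 2 + g i 2 * g j 1 * g k 0 * h1 2 1 0 + g i 2 * g j 1 * g k 1 * h1 2 1 1 + g i 2 * g j 1 * g k 2 * h1 2 1 2 + g i 2 * g j 2 * g k 0 * h1 2 2 0 + g i 2 * g j 2 * g k 1 * h1 2 2 1 + g i 2 * g j 2 * g k 2 * h1 2 2 2
    · simp only [act, Fin.sum_univ_three]
      linear_combination g i 0 * g j 0 * g k 0 * hc 0 0 0 + g i 0 * g j 0 * g k 1 * hc 0 0 1 + g i 0 * g j 0 * g k 2 * hc 0 0 2 + g i 0 * g j 1 * g k 0 * hc 0 1 0 + g i 0 * g j 1 * g k 1 * hc 0 1 1 + g i 0 * g j 1 * g k 2 * hc 0 1 2 + g i 0 * g j 2 * g k 0 * hc 0 2 0 + g i 0 * g j 2 * g k 1 * hc 0 2 1 + g i 0 * g j 2 * g k 2 * hc 0 2 2 + g i 1 * g j 0 * g k 0 * hc 1 0 0 + g i 1 * g j 0 * g k 1 * hc 1 0 1 + g i 1 * g j 0 * g k 2 * hc 1 0 2 + g i 1 *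 g j 1 * g k 0 * hc 1 1 0 + g i 1 * g j 1 * g k 1 * hc 1 1 1 + g i 1 * g j 1 * g k 2 * hc 1 1 2 + g i 1 * g j 2 * g k 0 * hc 1 2 0 + g i 1 * g j 2 * g k 1 * hc 1 2 1 + g i 1 * g j 2 * g k 2 * hc 1 2 2 + g i 2 * g j 0 * g k 0 * hc 2 0 0 + g i 2 * g j 0 * g k 1 * hc 2 0 1 + g i 2 * g j 0 * g k 2 * hc 2 0 2 + g i 2 * g j 1 * g k 0 * hc 2 1 0 + g i 2 * g j 1 * g k 1 * hc 2 1 1 + g i 2 * g j 1 * g k 2 * hc 2 1 2 + g i 2 * g j 2 * g k 0 * hc 2 2 0 + g i 2 * g j 2 * g k 1 * hc 2 2 1 + g i 2 * g j 2 * g k 2 * hc 2 2 2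
end

section
/- Let S : Fin 3 → Fin 3 → Fin 3 → ℝ be completely symmetric (S i j k = S j i k and S i j k = S i k j for all i, j, k). Define V i = ∑ p, S p p i and H i j k = S i j k − (1/5) * (V i * δ j k + V j * δ i k + V k * δ i j), where δ is the Kronecker delta on Fin 3. Then H is completely symmetric and traceless (∑ p, H p p k = 0 for all k) and S i j k = H i j k + (1/5) * (V i * δ j k + V j * δ i k + V k * δ i j). Moreover this decomposition is unique: if H' is completely symmetric and traceless and W : Fin 3 → ℝ satisfies S i j k = H' i j k + (1/5) * (W i * δ j k + W j * δ i k + W k * δ i j) for all i, j, k, then H' = H and W = V. -/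
/-- The Kronecker delta on `Fin 3`. -/
def kron (i j : Fin 3) : ℝ := if i = j then 1 else 0

lemma kron_symm (i j : Fin 3) : kron i j = kron j i := by
  simp [kron, eq_comm]

lemma kron_trace_aux (k : Fin 3) (W : Fin 3 → ℝ) :
    ∑ p : Fin 3, (W p * kron p k + W p * kron p k + W k * kron p p) =
      2 * W k + 3 * W k := by
  fin_cases k <;> simp [Fin.sum_univ_three, kron] <;> ring

theorem harmonic_decomposition_of_stretch_gradient
    (S : Fin 3 → Fin 3 → Fin 3 → ℝ)
    (hS1 : ∀ i j k, S i j k = S j i k)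
    (hS2 : ∀ i j k, S i j k = S i k j)
    (V : Fin 3 → ℝ) (hV : ∀ i, V i = ∑ p : Fin 3, S p p i)
    (H : Fin 3 → Fin 3 → Fin 3 → ℝ)
    (hH : ∀ i j k, H i j k =
      S i j k - (1 / 5) * (V i * kron j k + V j * kron i k + V k * kron i j)) :
    ((∀ i j k, H i j k = H j i k) ∧ (∀ i j k, H i j k = H i k j)) ∧
    (∀ k, ∑ p : Fin 3, H p p k = 0) ∧
    (∀ i j k, S i j k =
      H i j k + (1 / 5) * (V i * kron j k + V j * kron i k + V k * kron i j)) ∧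
    (∀ (H' : Fin 3 → Fin 3 → Fin 3 → ℝ) (W : Fin 3 → ℝ),
      (∀ i j k, H' i j k = H' j i k) → (∀ i j k, H' i j k = H' i k j) →
      (∀ k, ∑ p : Fin 3, H' p p k = 0) →
      (∀ i j k, S i j k =
        H' i j k + (1 / 5) * (W i * kron j k + W j * kron i k + W k * kron i j)) →
      H' = H ∧ W = V) := by
  have trH : ∀ k, ∑ p : Fin 3, H p p k = 0 := by
    intro k
    have : ∑ p : Fin 3, H p p k =
        (∑ p : Fin 3, S p p k) -
          (1 / 5) * ∑ p : Fin 3, (V p * kron p k + V p * kron p k + V k * kron p p) := by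
      simp only [hH, Finset.sum_sub_distrib, Finset.mul_sum]
    rw [this, kron_trace_aux, ← hV]
    ring
  refine ⟨⟨?_, ?_⟩, trH, ?_, ?_⟩
  · intro i j k; rw [hH, hH, hS1, kron_symm i k, kron_symm i j]; ring
  · intro i j k; rw [hH, hH, hS2, kron_symm i k, kron_symm i j, kron_symm j k]; ring
  · intro i j k; rw [hH]; ring
  · intro H' W h1 h2 h3 h4
    have hWV : W = V := by
      funext k
      have : ∑ p : Fin 3, S p p k =
          (∑ p : Fin 3, H' p p k) +
            (1 / 5) * ∑ p : Fin 3, (W p * kron p k + W p * kron p k + W k * kron p p) := by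
        rw [Finset.mul_sum, ← Finset.sum_add_distrib]
        exact Finset.sum_congr rfl fun p _ => h4 p p k
      rw [h3, kron_trace_aux, ← hV] at this
      linarith
    refine ⟨?_, hWV⟩
    funext i; funext j; funext k
    rw [hH, h4 i j k, hWV]; ring
end

section
/- Let 𝕋² be the submodule of (Fin 3 → Fin 3 → Fin 3 → ℝ) consisting of T with T i j k = T j i k for all i, j, k, and let 𝕂 be the submodule of those T ∈ 𝕋² with T i j k + T k i j + T j k i = 0 for all i, j, k. Define the linear map ℛ sending T to the matrix ℛ(T) i j = ∑ p q, ε i p q * T j p q. Then: (i) for every T ∈ 𝕋², the matrix ℛ(T) has trace zero; (ii) the restriction of ℛ to 𝕂 is a linear isomorphism from 𝕂 onto the space of traceless matrices {M : Matrix (Fin 3) (Fin 3) ℝ | Matrix.trace M = 0}. -/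
open Matrix

/-- The Levi-Civita symbol on `Fin 3`. -/
def leviCivita (i j k : Fin 3) : ℝ :=
  if (i, j, k) = (0, 1, 2) ∨ (i, j, k) = (1, 2, 0) ∨ (i, j, k) = (2, 0, 1) then 1
  else if (i, j, k) = (0, 2, 1) ∨ (i, j, k) = (2, 1, 0) ∨ (i, j, k) = (1, 0, 2) then -1
  else 0

/-- The rotation-gradient map ℛ sending a third-order tensor to a matrix. -/
def rotMap (T : Fin 3 → Fin 3 → Fin 3 → ℝ) : Matrix (Fin 3) (Fin 3) ℝ :=
  Matrix.of fun i j => ∑ p : Fin 3, ∑ q : Fin 3, leviCivita i p q * T j p q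

lemma trace_rotMap_eq_zero (T : Fin 3 → Fin 3 → Fin 3 → ℝ)
    (hT : ∀ i j k, T i j k = T j i k) : Matrix.trace (rotMap T) = 0 := by
  simp (config := {decide := true}) [Matrix.trace, Matrix.diag, rotMap, Fin.sum_univ_three,
    leviCivita]
  linarith [hT 0 1 2, hT 1 2 0, hT 2 0 1]

/-- Candidate inverse of `rotMap`. -/
noncomputable def invFun' (M : Matrix (Fin 3) (Fin 3) ℝ) : Fin 3 → Fin 3 → Fin 3 → ℝ :=
  fun i j k => (1/3) * ((∑ m, leviCivita m i k * M m j) + (∑ m, leviCivita m j k * M m i))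

set_option maxHeartbeats 2000000 in
lemma SR (T : Fin 3 → Fin 3 → Fin 3 → ℝ) (i j k : Fin 3) :
    invFun' (rotMap T) i j k = (1/3) * (T j i k - T j k i + T i j k - T i k j) := by
  fin_cases i <;> fin_cases j <;> fin_cases k <;>
    (simp (config := {decide := true}) [invFun', rotMap, leviCivita, Fin.sum_univ_three]; try ring)

set_option maxHeartbeats 2000000 in
lemma RS (M : Matrix (Fin 3) (Fin 3) ℝ) (htr : Matrix.trace M = 0) (i j : Fin 3) :
    rotMap (invFun' M) i j = M i j := by
  simp only [Matrix.trace, Matrix.diag, Fin.sum_univ_three] at htr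
  fin_cases i <;> fin_cases j <;>
    (simp (config := {decide := true}) [invFun', rotMap, leviCivita, Fin.sum_univ_three];
      try linarith)

lemma lc_antisymm13 (m a b : Fin 3) : leviCivita m a b = - leviCivita m b a := by
  fin_cases m <;> fin_cases a <;> fin_cases b <;>
    simp (config := {decide := true}) [leviCivita]

lemma invFun'_mem_KK (M : Matrix (Fin 3) (Fin 3) ℝ) : invFun' M ∈ KK := by
  refine ⟨fun i j k => by simp only [invFun']; ring, fun i j k => ?_⟩
  have h : ∀ a b c : Fin 3, (∑ m, leviCivita m a b * M m c) +
      (∑ m, leviCivita m b a * M m c) = 0 := by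
    intro a b c
    rw [← Finset.sum_add_distrib]
    refine Finset.sum_eq_zero fun m _ => ?_
    rw [lc_antisymm13 m a b]; ring
  simp only [invFun']
  have e1 := h i k j
  have e2 := h j k i
  have e3 := h i j k
  linarith

noncomputable def rotMapLin : (Fin 3 → Fin 3 → Fin 3 → ℝ) →ₗ[ℝ] Matrix (Fin 3) (Fin 3) ℝ where
  toFun := rotMap
  map_add' a b := by
    ext i j
    simp [rotMap, mul_add, Finset.sum_add_distrib]
  map_smul' c a := by
    ext i j
    simp [rotMap, Finset.mul_sum, mul_left_comm]

noncomputable def invLin : Matrix (Fin 3) (Fin 3) ℝ →ₗ[ℝ] (Fin 3 → Fin 3 → Fin 3 → ℝ) where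
  toFun := invFun'
  map_add' a b := by
    funext i j k
    simp [invFun', mul_add, Finset.sum_add_distrib]
    ring
  map_smul' c a := by
    funext i j k
    simp [invFun', Fin.sum_univ_three]
    ring

noncomputable def fMap : ↥KK →ₗ[ℝ] ↥(LinearMap.ker (Matrix.traceLinearMap (Fin 3) ℝ ℝ)) :=
  LinearMap.codRestrict _ (rotMapLin ∘ₗ KK.subtype) (fun T => by
    simp only [LinearMap.mem_ker, LinearMap.comp_apply, Submodule.coe_subtype,
      Matrix.traceLinearMap_apply]
    exact trace_rotMap_eq_zero T.1 T.2.1)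

noncomputable def gMap : ↥(LinearMap.ker (Matrix.traceLinearMap (Fin 3) ℝ ℝ)) →ₗ[ℝ] ↥KK :=
  LinearMap.codRestrict _ (invLin ∘ₗ (LinearMap.ker (Matrix.traceLinearMap (Fin 3) ℝ ℝ)).subtype)
    (fun M => invFun'_mem_KK M.1)

theorem rotation_gradient_iso_traceless :
    (∀ T ∈ T2, Matrix.trace (rotMap T) = 0) ∧
    ∃ e : ↥KK ≃ₗ[ℝ] ↥(LinearMap.ker (Matrix.traceLinearMap (Fin 3) ℝ ℝ)),
      ∀ T : ↥KK, ((e T : Matrix (Fin 3) (Fin 3) ℝ)) = rotMap (T : Fin 3 → Fin 3 → Fin 3 → ℝ) := by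
  constructor
  · exact fun T hT => trace_rotMap_eq_zero T hT
  · refine ⟨LinearEquiv.ofLinear fMap gMap ?_ ?_, fun T => rfl⟩
    · ext M
      have htr : Matrix.trace (M : Matrix (Fin 3) (Fin 3) ℝ) = 0 := M.2
      show ((fMap (gMap M) : Matrix (Fin 3) (Fin 3) ℝ)) _ _ = (M : Matrix (Fin 3) (Fin 3) ℝ) _ _
      simp only [fMap, gMap, LinearMap.codRestrict_apply, LinearMap.comp_apply,
        Submodule.coe_subtype, rotMapLin, invLin, LinearMap.coe_mk, AddHom.coe_mk]
      rw [RS _ htr]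
    · ext T
      obtain ⟨hsym, hcyc⟩ := T.2
      show ((gMap (fMap T) : Fin 3 → Fin 3 → Fin 3 → ℝ)) _ _ _
        = (T : Fin 3 → Fin 3 → Fin 3 → ℝ) _ _ _
      simp only [fMap, gMap, LinearMap.codRestrict_apply, LinearMap.comp_apply,
        Submodule.coe_subtype, rotMapLin, invLin, LinearMap.coe_mk, AddHom.coe_mk]
      rw [SR]
      rename_i i j k
      have h1 := hsym j i k
      have h2 := hcyc i j k
      have h3 := hsym k i j
      linarith
end
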